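/- For every positive rational a and every rational L, there exists a rational x with a < x < 2a and D(x) ≥ L. -/

import Mathlib

/-- The arithmetic derivative on `ℕ`: `D p = 1` for primes, `D (a*b) = D a * b + a * D b`;
explicitly `D n = n * Σ αᵢ / pᵢ` for `n = ∏ pᵢ ^ αᵢ`, and `D 0 = D 1 = 0`. -/
def arithDeriv (n : ℕ) : ℕ := ∑ p ∈ n.primeFactors, n.factorization p * (n / p)

/-- The logarithmic arithmetic derivative `ld n = D n / n = Σ αᵢ / pᵢ` of a natural number. -/
def natLogDeriv (n : ℕ) : ℚ := ∑ p ∈ n.primeFactors, (n.factorization p : ℚ) / p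

/-- The arithmetic derivative on `ℚ`: the unique function with `D p = 1` for primes
satisfying the Leibniz rule `D (x*y) = D x * y + x * D y`; explicitly
`D (± a/b) = ± (D a * b - a * D b) / b²` for coprime naturals `a`, `b`. -/
def ratArithDeriv (q : ℚ) : ℚ := q * (natLogDeriv q.num.natAbs - natLogDeriv q.den)

/-!
The witnesses are `x = 2 ^ t / 3 ^ s`, whose derivative is `x * (t / 2 - s / 3)`.
For each `s` the interval `(a * 3 ^ s, 2 * a * 3 ^ s)` contains a power `2 ^ t` unless its
left end is itself a power of `2`, which happens for at most one `s`. Since `3 ^ s ≥ 2 ^ s`,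
such a `t` is at least `s - O(1)`, so `t / 2 - s / 3 ≥ s / 6 - O(1)` is unbounded in `s`.
-/

lemma natLogDeriv_prime_pow {p : ℕ} (hp : p.Prime) (k : ℕ) :
    natLogDeriv (p ^ k) = k / p := by
  rcases Nat.eq_zero_or_pos k with rfl | hk
  · simp [natLogDeriv]
  · simp [natLogDeriv, Nat.primeFactors_prime_pow hk.ne' hp, hp.factorization_pow]

lemma ratArithDeriv_pow_div_pow {p q : ℕ} (hp : p.Prime) (hq : q.Prime) (hpq : p ≠ q)
    (m n : ℕ) : ratArithDeriv ((p : ℚ) ^ m / q ^ n) = (p : ℚ) ^ m / q ^ n * (m / p - n / q) := by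
  have hcop : Nat.Coprime ((p : ℤ) ^ m).natAbs ((q : ℤ) ^ n).natAbs := by
    simpa [Int.natAbs_pow] using ((Nat.coprime_primes hp hq).mpr hpq).pow m n
  have hpos : (0 : ℤ) < (q : ℤ) ^ n := pow_pos (by exact_mod_cast hq.pos) n
  have hnum := Rat.num_div_eq_of_coprime hpos hcop
  have hden := Rat.den_div_eq_of_coprime hpos hcop
  push_cast at hnum hden
  have hden' : ((p : ℚ) ^ m / q ^ n).den = q ^ n := by exact_mod_cast hden
  rw [ratArithDeriv, hnum, hden', Int.natAbs_pow, Int.natAbs_natCast,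
    natLogDeriv_prime_pow hp, natLogDeriv_prime_pow hq]

lemma exists_pow_mem_Ioo {K : Type*} [Field K] [LinearOrder K] [IsStrictOrderedRing K]
    [Archimedean K] {b y : K} (hb : 1 < b) (hy : 1 ≤ y) (hy' : ∀ j : ℕ, y ≠ b ^ j) :
    ∃ t : ℕ, y < b ^ t ∧ b ^ t < b * y := by
  have hex : ∃ t : ℕ, y < b ^ t := pow_unbounded_of_one_lt y hb
  refine ⟨Nat.find hex, Nat.find_spec hex, ?_⟩
  obtain ⟨t, ht⟩ : ∃ t, Nat.find hex = t + 1 := by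
    refine Nat.exists_eq_add_one.mpr (Nat.pos_of_ne_zero fun h0 => ?_)
    have := Nat.find_spec hex
    rw [h0, pow_zero] at this
    exact absurd hy (not_le.mpr this)
  have hle : b ^ t ≤ y := not_lt.mp (Nat.find_min hex (by omega))
  rw [ht, pow_succ']
  exact mul_lt_mul_of_pos_left ((hle.lt_of_ne (hy' t).symm)) (by linarith)

lemma three_mul_pow_two_ne_pow_two (j k : ℕ) : (3 : ℚ) * 2 ^ j ≠ 2 ^ k := by
  intro h
  have h3 : 3 ∣ 2 ^ k := ⟨2 ^ j, by exact_mod_cast h.symm⟩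
  exact absurd (Nat.prime_three.dvd_of_dvd_pow h3) (by norm_num)

lemma exists_mul_pow_three_ne_pow_two (a : ℚ) (s₀ : ℕ) :
    ∃ s ≥ s₀, ∀ j : ℕ, a * 3 ^ s ≠ 2 ^ j := by
  by_cases h : ∀ j : ℕ, a * 3 ^ s₀ ≠ 2 ^ j
  · exact ⟨s₀, le_rfl, h⟩
  · push Not at h
    obtain ⟨j, hj⟩ := h
    refine ⟨s₀ + 1, by omega, fun k hk => three_mul_pow_two_ne_pow_two j k ?_⟩
    rw [← hj, ← hk]
    ring

lemma exists_pow_two_div_pow_three_mem_Ioo {a : ℚ} (ha : 0 < a) (s₀ : ℕ) :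
    ∃ s t : ℕ, s₀ ≤ s ∧ a < 2 ^ t / 3 ^ s ∧ (2 : ℚ) ^ t / 3 ^ s < 2 * a := by
  obtain ⟨K, hK⟩ := pow_unbounded_of_one_lt a⁻¹ (by norm_num : (1 : ℚ) < 2)
  obtain ⟨s, hs, hs'⟩ := exists_mul_pow_three_ne_pow_two a (max s₀ K)
  have hy : 1 ≤ a * 3 ^ s := by
    calc (1 : ℚ) ≤ a * 2 ^ K := by rw [inv_lt_iff_one_lt_mul₀ ha] at hK; linarith
      _ ≤ a * 3 ^ s := by
        gcongr
        calc (2 : ℚ) ^ K ≤ 2 ^ s := pow_le_pow_right₀ (by norm_num) (by omega)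
          _ ≤ 3 ^ s := pow_le_pow_left₀ (by norm_num) (by norm_num) s
  obtain ⟨t, hlo, hhi⟩ := exists_pow_mem_Ioo (by norm_num) hy hs'
  have h3 : (0 : ℚ) < 3 ^ s := by positivity
  refine ⟨s, t, le_of_max_le_left hs, ?_, ?_⟩
  · rwa [lt_div_iff₀ h3]
  · rw [div_lt_iff₀ h3]; linarith

lemma lt_add_of_lt_two_pow_div_three_pow {a : ℚ} {K s t : ℕ} (hK : 1 < 2 ^ K * a)
    (hax : a < 2 ^ t / 3 ^ s) : s < t + K := by
  rw [lt_div_iff₀ (by positivity)] at hax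
  refine (pow_lt_pow_iff_right₀ (one_lt_two : (1 : ℚ) < 2)).mp ?_
  calc (2 : ℚ) ^ s ≤ 3 ^ s := pow_le_pow_left₀ (by norm_num) (by norm_num) s
    _ < 3 ^ s * (2 ^ K * a) := lt_mul_right (by positivity) hK
    _ = a * 3 ^ s * 2 ^ K := by ring
    _ < 2 ^ t * 2 ^ K := by gcongr
    _ = 2 ^ (t + K) := (pow_add 2 t K).symm

/-- For every positive rational `a` and every rational `L` there is a rational
`x ∈ (a, 2a)` with `D x ≥ L`. -/
theorem stmt_12 (a : ℚ) (ha : 0 < a) (L : ℚ) :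
    ∃ x : ℚ, a < x ∧ x < 2 * a ∧ L ≤ ratArithDeriv x := by
  obtain ⟨K, hK⟩ := pow_unbounded_of_one_lt a⁻¹ (one_lt_two : (1 : ℚ) < 2)
  rw [inv_lt_iff_one_lt_mul₀ ha] at hK
  obtain ⟨n, hn⟩ := exists_nat_ge (L / a)
  obtain ⟨s, t, hs, hax, hx2a⟩ := exists_pow_two_div_pow_three_mem_Ioo ha (6 * n + 3 * K)
  have hc : (n : ℚ) ≤ t / 2 - s / 3 := by
    have : (s : ℚ) + 1 ≤ t + K := by exact_mod_cast lt_add_of_lt_two_pow_div_three_pow hK hax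
    have : (6 * n + 3 * K : ℚ) ≤ s := by exact_mod_cast hs
    linarith
  have hD := ratArithDeriv_pow_div_pow Nat.prime_two Nat.prime_three (by norm_num) t s
  push_cast at hD
  refine ⟨_, hax, hx2a, hD ▸ ?_⟩
  calc L ≤ a * n := by rwa [div_le_iff₀' ha] at hn
    _ ≤ _ := mul_le_mul hax.le hc n.cast_nonneg (ha.trans hax).le
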